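/- arXiv:1903.08706 — 2 statements merged into one kernel-verified Lean document; each statement's English description precedes it below -/
import Mathlib

section
/- Let D be a subordinator with infinite Lévy measure ν and Laplace exponent ψ, let E be its inverse subordinator, and set g(s) = ψ'(s), R(s) = ψ(s) − sψ'(s). Fix λ > 0, t > 0 and r > 0. If there exist a constant M > 0 and a function x : [M,∞) → (g(∞), g(0+)) such that s·x(s) → ∞ and R(g^{−1}(x(s)))/s^{r−1} → ∞ as s → ∞, then E[exp(λ E_t^r)] < ∞. -/
/-!
For `u > 0`, `E_t > u` forces `D_u ≤ t`, so by Chernoff's bound with the Laplace transform,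
`P(E_t > u) ≤ exp (s t - u ψ(s))` for every `s > 0`. Take `s = g⁻¹(x(u))`: by the tangent line
`ψ(s) = R(s) + s ψ'(s)` the exponent is `s (t - u x(u)) - u R(s) ≤ -u R(s)` as soon as
`u x(u) ≥ t`, and `u R(s) / u ^ r → ∞`. Hence `P(E_t > u) ≤ exp (-C u ^ r)` eventually for
every `C`, which makes `exp (λ E_t ^ r)` integrable once `C > λ 2 ^ r`.
-/

open MeasureTheory Filter Topology Set Real

lemma summable_exp_neg_mul_rpow {c r : ℝ} (hc : 0 < c) (hr : 0 < r) :
    Summable fun n : ℕ => exp (-(c * (n : ℝ) ^ r)) := by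
  refine summable_of_isBigO_nat (Real.summable_nat_rpow.mpr (by norm_num : (-2 : ℝ) < -1)) ?_
  have hpow : Tendsto (fun n : ℕ => (n : ℝ) ^ r) atTop atTop :=
    (tendsto_rpow_atTop hr).comp tendsto_natCast_atTop_atTop
  refine ((isLittleO_exp_neg_mul_rpow_atTop hc (-2 / r)).comp_tendsto hpow).isBigO.congr'
    (Eventually.of_forall fun n => by simp [neg_mul]) (Eventually.of_forall fun n => ?_)
  simp only [Function.comp_apply]
  rw [← Real.rpow_mul (Nat.cast_nonneg n), mul_div_cancel₀ _ hr.ne']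

lemma tsum_ofReal_ne_top_of_eventually_le {f g : ℕ → ℝ} (hf : 0 ≤ f) (hg : Summable g)
    (hfg : f ≤ᶠ[atTop] g) : ∑' n, ENNReal.ofReal (f n) ≠ ⊤ := by
  have hsum : Summable f := hg.of_norm_bounded_eventually_nat <| hfg.mono fun n hn => by
    rwa [Real.norm_of_nonneg (hf n)]
  rw [← ENNReal.ofReal_tsum_of_nonneg hf hsum]
  exact ENNReal.ofReal_ne_top

lemma exists_nat_add_one_lt_le_add_two {y : ℝ} (hy : 1 < y) :
    ∃ n : ℕ, (n : ℝ) + 1 < y ∧ y ≤ n + 2 := by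
  have hceil : 2 ≤ ⌈y⌉₊ := Nat.lt_ceil.mpr (by exact_mod_cast hy)
  refine ⟨⌈y⌉₊ - 2, ?_, ?_⟩
  · exact_mod_cast Nat.lt_ceil.mp (by omega : ⌈y⌉₊ - 2 + 1 < ⌈y⌉₊)
  · have := Nat.le_ceil y
    rwa [show ⌈y⌉₊ = ⌈y⌉₊ - 2 + 2 by omega, Nat.cast_add, Nat.cast_two] at this

lemma mul_add_two_rpow_sub_le {lam r C y : ℝ} (hy : 0 ≤ y) (hlam : 0 ≤ lam) (hr : 0 ≤ r)
    (hC : lam * 2 ^ r ≤ C) :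
    lam * (y + 2) ^ r - C * (y + 1) ^ r ≤ -((C - lam * 2 ^ r) * y ^ r) := by
  have hdouble : (y + 2) ^ r ≤ 2 ^ r * (y + 1) ^ r := by
    rw [← mul_rpow (by norm_num) (by positivity)]
    exact rpow_le_rpow (by positivity) (by linarith) hr
  have hmono : y ^ r ≤ (y + 1) ^ r := rpow_le_rpow hy (by linarith) hr
  nlinarith [mul_le_mul_of_nonneg_left hdouble hlam,
    mul_le_mul_of_nonneg_left hmono (sub_nonneg.mpr hC)]

lemma ofReal_exp_mul_rpow_le_add_tsum_indicator {Ω : Type*} {X : Ω → ℝ} {S : ℝ → Set Ω}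
    {lam r : ℝ} (hX : ∀ ω, 0 ≤ X ω) (hXS : ∀ u, 0 < u → ∀ ω, u < X ω → ω ∈ S u)
    (hlam : 0 ≤ lam) (hr : 0 ≤ r) (ω : Ω) :
    ENNReal.ofReal (exp (lam * X ω ^ r)) ≤ ENNReal.ofReal (exp lam) + ∑' n : ℕ,
      (S (n + 1)).indicator (fun _ => ENNReal.ofReal (exp (lam * ((n : ℝ) + 2) ^ r))) ω := by
  rcases le_or_gt (X ω) 1 with hle | hgt
  · refine le_add_right (ENNReal.ofReal_le_ofReal (exp_le_exp.mpr ?_))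
    simpa using mul_le_mul_of_nonneg_left (rpow_le_one (hX ω) hle hr) hlam
  · obtain ⟨n, hlt, hle⟩ := exists_nat_add_one_lt_le_add_two hgt
    refine le_add_left ((ENNReal.le_tsum n).trans' ?_)
    rw [indicator_of_mem (hXS _ (by positivity) ω hlt)]
    exact ENNReal.ofReal_le_ofReal <| exp_le_exp.mpr <|
      mul_le_mul_of_nonneg_left (rpow_le_rpow (hX ω) hle hr) hlam

theorem lintegral_exp_mul_rpow_lt_top_of_tail {Ω : Type*} [MeasurableSpace Ω] {μ : Measure Ω}
    [IsFiniteMeasure μ] {X : Ω → ℝ} {S : ℝ → Set Ω} {lam r C : ℝ} (hX : ∀ ω, 0 ≤ X ω)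
    (hS : ∀ u, MeasurableSet (S u)) (hXS : ∀ u, 0 < u → ∀ ω, u < X ω → ω ∈ S u)
    (hlam : 0 ≤ lam) (hr : 0 < r) (hC : lam * 2 ^ r < C)
    (htail : ∀ᶠ u in atTop, μ.real (S u) ≤ exp (-(C * u ^ r))) :
    ∫⁻ ω, ENNReal.ofReal (exp (lam * X ω ^ r)) ∂μ < ⊤ := by
  set w : ℕ → ℝ := fun n => exp (lam * ((n : ℝ) + 2) ^ r)
  have hpt := ofReal_exp_mul_rpow_le_add_tsum_indicator hX hXS hlam hr.le
  have hint : ∫⁻ ω, ENNReal.ofReal (exp (lam * X ω ^ r)) ∂μ ≤ ENNReal.ofReal (exp lam) * μ univ +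
      ∑' n : ℕ, ENNReal.ofReal (w n * μ.real (S (n + 1))) := calc
    _ ≤ ∫⁻ ω, ENNReal.ofReal (exp lam) +
          ∑' n : ℕ, (S (n + 1)).indicator (fun _ => ENNReal.ofReal (w n)) ω ∂μ :=
        lintegral_mono hpt
    _ = _ := by
      rw [lintegral_add_left measurable_const, lintegral_const, lintegral_tsum fun n =>
        (measurable_const.indicator (hS _)).aemeasurable]
      congr 1
      refine tsum_congr fun n => ?_
      rw [lintegral_indicator_const (hS _), ENNReal.ofReal_mul (exp_pos _).le, ofReal_measureReal]
  set c := C - lam * 2 ^ r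
  have hterm : ∀ᶠ n : ℕ in atTop, w n * μ.real (S (n + 1)) ≤ exp (-(c * (n : ℝ) ^ r)) := by
    have hshift : Tendsto (fun n : ℕ => (n : ℝ) + 1) atTop atTop :=
      tendsto_atTop_add_const_right _ 1 tendsto_natCast_atTop_atTop
    filter_upwards [hshift.eventually htail] with n hn
    calc w n * μ.real (S (n + 1)) ≤ w n * exp (-(C * ((n : ℝ) + 1) ^ r)) :=
          mul_le_mul_of_nonneg_left hn (exp_pos _).le
      _ = exp (lam * ((n : ℝ) + 2) ^ r - C * ((n : ℝ) + 1) ^ r) := by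
          rw [← exp_add, sub_eq_add_neg]
      _ ≤ exp (-(c * (n : ℝ) ^ r)) :=
          exp_le_exp.mpr (mul_add_two_rpow_sub_le n.cast_nonneg hlam hr.le hC.le)
  have hsum := tsum_ofReal_ne_top_of_eventually_le
    (fun n => mul_nonneg (exp_pos _).le measureReal_nonneg)
    (summable_exp_neg_mul_rpow (sub_pos.mpr hC) hr) hterm
  exact hint.trans_lt (ENNReal.add_lt_top.mpr
    ⟨ENNReal.mul_lt_top ENNReal.ofReal_lt_top (measure_lt_top μ _), hsum.lt_top⟩)

lemma measureReal_le_le_exp_mul_integral_exp_neg {Ω : Type*} [MeasurableSpace Ω] {μ : Measure Ω}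
    [IsFiniteMeasure μ] {X : Ω → ℝ} {s : ℝ} (hs : 0 ≤ s) (t : ℝ)
    (hX : ∫ ω, exp (-(s * X ω)) ∂μ ≠ 0) :
    μ.real {ω | X ω ≤ t} ≤ exp (s * t) * ∫ ω, exp (-(s * X ω)) ∂μ := by
  have h := ProbabilityTheory.measure_le_le_exp_mul_mgf (X := X) (μ := μ) t (neg_nonpos.mpr hs)
    (Integrable.of_integral_ne_zero (by simpa only [neg_mul] using hX))
  simpa only [ProbabilityTheory.mgf, neg_mul, neg_neg] using h

noncomputable def firstPassageTime (f : ℝ → ℝ) (t : ℝ) : ℝ := sInf {u | 0 < u ∧ t < f u}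

lemma firstPassageTime_nonneg (f : ℝ → ℝ) (t : ℝ) : 0 ≤ firstPassageTime f t :=
  Real.sInf_nonneg fun _ hu => hu.1.le

lemma le_of_lt_firstPassageTime {f : ℝ → ℝ} {t u : ℝ} (hu : 0 < u)
    (h : u < firstPassageTime f t) : f u ≤ t := by
  by_contra! hlt
  exact h.not_ge (csInf_le ⟨0, fun _ hv => hv.1.le⟩ ⟨hu, hlt⟩)

lemma eventually_measureReal_le_le_exp_neg_mul_rpow {Ω : Type*} [MeasurableSpace Ω]
    {μ : Measure Ω} [IsFiniteMeasure μ] {D : ℝ → Ω → ℝ} {ψ s : ℝ → ℝ} (t r C : ℝ)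
    (hlaplace : ∀ s, 0 < s → ∀ u, 0 ≤ u →
      ∫ ω, exp (-(s * D u ω)) ∂μ = exp (-(u * ψ s)))
    (hs : ∀ᶠ u in atTop, 0 < s u)
    (hslope : Tendsto (fun u => u * deriv ψ (s u)) atTop atTop)
    (hR : Tendsto (fun u => (ψ (s u) - s u * deriv ψ (s u)) / u ^ (r - 1)) atTop atTop) :
    ∀ᶠ u in atTop, μ.real {ω | D u ω ≤ t} ≤ exp (-(C * u ^ r)) := by
  filter_upwards [hs, hslope.eventually_ge_atTop t, hR.eventually_ge_atTop C,
    eventually_gt_atTop 0] with u hsu hslopeu hRu hu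
  have hchernoff := measureReal_le_le_exp_mul_integral_exp_neg (μ := μ) (X := D u) hsu.le t
    (by rw [hlaplace _ hsu u hu.le]; exact (exp_pos _).ne')
  rw [hlaplace _ hsu u hu.le, ← exp_add] at hchernoff
  refine hchernoff.trans (exp_le_exp.mpr ?_)
  have hRu' : C * u ^ r ≤ u * ψ (s u) - s u * (u * deriv ψ (s u)) := by
    rw [le_div_iff₀ (rpow_pos_of_pos hu _)] at hRu
    calc C * u ^ r = u * (C * u ^ (r - 1)) := by rw [rpow_sub_one hu.ne']; field_simp
      _ ≤ u * (ψ (s u) - s u * deriv ψ (s u)) := mul_le_mul_of_nonneg_left hRu hu.le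
      _ = _ := by ring
  nlinarith [mul_le_mul_of_nonneg_left hslopeu hsu.le]

theorem exp_moment_inverse_subordinator_finite_of_tail_limit_general
    {Ω : Type*} [MeasurableSpace Ω] (P : Measure Ω) [IsProbabilityMeasure P]
    (D : ℝ → Ω → ℝ) (ψ : ℝ → ℝ) (lam t r : ℝ)
    (hDmeas : ∀ u, Measurable (D u))
    (hlaplace : ∀ s, 0 < s → ∀ u, 0 ≤ u →
      ∫ ω, Real.exp (-(s * D u ω)) ∂P = Real.exp (-(u * ψ s)))
    (hlam : 0 < lam) (hr : 0 < r)
    (M : ℝ) (x xinv : ℝ → ℝ)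
    (hxrange : ∀ s, M ≤ s → 0 < xinv s ∧ deriv ψ (xinv s) = x s)
    (hxtop : Tendsto (fun s => s * x s) atTop atTop)
    (hRtop : Tendsto
      (fun s => (ψ (xinv s) - xinv s * deriv ψ (xinv s)) / s ^ (r - 1)) atTop atTop) :
    ∫⁻ ω, ENNReal.ofReal (Real.exp (lam * (sInf {u : ℝ | 0 < u ∧ t < D u ω}) ^ r)) ∂P < ⊤ := by
  have hslope : Tendsto (fun u => u * deriv ψ (xinv u)) atTop atTop :=
    hxtop.congr' <| (eventually_ge_atTop M).mono fun u hu => by simp only [(hxrange u hu).2]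
  have htail := eventually_measureReal_le_le_exp_neg_mul_rpow (μ := P) (D := D) t r
    (lam * 2 ^ r + 1) hlaplace ((eventually_ge_atTop M).mono fun u hu => (hxrange u hu).1)
    hslope hRtop
  exact lintegral_exp_mul_rpow_lt_top_of_tail (X := fun ω => firstPassageTime (D · ω) t)
    (fun ω => firstPassageTime_nonneg _ t) (fun u => measurableSet_le (hDmeas u) measurable_const)
    (fun u hu ω h => le_of_lt_firstPassageTime hu h) hlam.le hr (lt_add_one _) htail

/-- Let `D` be a subordinator with infinite Lévy measure `ν` and Laplace
exponent `ψ`, let `E_t = inf {u > 0 : D_u > t}` be its inverse, and set `g = ψ'`,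
`R s = ψ s - s ψ' s`.  Fix `λ > 0`, `t > 0`, `r > 0`.  If there exist `M > 0` and a function
`x : [M,∞) → (g(∞), g(0+))` (encoded by a positive preimage function `xinv` with
`g (xinv s) = x s`) such that `s * x s → ∞` and `R (g⁻¹ (x s)) / s ^ (r-1) → ∞` as `s → ∞`,
then `E[exp (λ E_t ^ r)] < ∞`. -/
theorem exp_moment_inverse_subordinator_finite_of_tail_limit
    {Ω : Type*} [MeasurableSpace Ω] (P : Measure Ω) [IsProbabilityMeasure P]
    (D : ℝ → Ω → ℝ) (ν : Measure ℝ) (ψ : ℝ → ℝ) (lam t r : ℝ)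
    (hDmeas : ∀ u, Measurable (D u))
    (hD0 : ∀ ω, D 0 ω = 0)
    (hDmono : ∀ ω, MonotoneOn (fun u => D u ω) (Set.Ici 0))
    (hDrc : ∀ ω, ∀ u, 0 ≤ u → ContinuousWithinAt (fun v => D v ω) (Set.Ici u) u)
    (hstat : ∀ s u : ℝ, 0 ≤ s → 0 ≤ u →
      Measure.map (fun ω => D (s + u) ω - D s ω) P = Measure.map (D u) P)
    (hindep : ∀ (n : ℕ) (τ : Fin (n + 1) → ℝ), (∀ i, 0 ≤ τ i) → Monotone τ →
      ProbabilityTheory.iIndepFun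
        (fun i : Fin n => fun ω => D (τ i.succ) ω - D (τ i.castSucc) ω) P)
    (hν : ∫⁻ y in Set.Ioi (0 : ℝ), ENNReal.ofReal (min y 1) ∂ν < ⊤)
    (hνinf : ν (Set.Ioi (0 : ℝ)) = ⊤)
    (hψ : ∀ s, 0 < s → ψ s = ∫ y in Set.Ioi (0 : ℝ), (1 - Real.exp (-(s * y))) ∂ν)
    (hlaplace : ∀ s, 0 < s → ∀ u, 0 ≤ u →
      ∫ ω, Real.exp (-(s * D u ω)) ∂P = Real.exp (-(u * ψ s)))
    (hlam : 0 < lam) (ht : 0 < t) (hr : 0 < r)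
    (M : ℝ) (x xinv : ℝ → ℝ) (hM : 0 < M)
    (hxrange : ∀ s, M ≤ s → 0 < xinv s ∧ deriv ψ (xinv s) = x s)
    (hxtop : Tendsto (fun s => s * x s) atTop atTop)
    (hRtop : Tendsto
      (fun s => (ψ (xinv s) - xinv s * deriv ψ (xinv s)) / s ^ (r - 1)) atTop atTop) :
    ∫⁻ ω, ENNReal.ofReal (Real.exp (lam * (sInf {u : ℝ | 0 < u ∧ t < D u ω}) ^ r)) ∂P < ⊤ :=
  exp_moment_inverse_subordinator_finite_of_tail_limit_general P D ψ lam t r hDmeas hlaplace hlam hr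
    M x xinv hxrange hxtop hRtop
end

section
/- Let D be a subordinator with infinite Lévy measure ν and Laplace exponent ψ, let E be its inverse subordinator, and set g(s) = ψ'(s), R(s) = ψ(s) − sψ'(s). Fix λ > 0, t > 0 and r > 0. If there exist a constant M > 0 and a decreasing function x : [M,∞) → (g(∞), g(0+)) such that s·x(s) → 0 and R(g^{−1}(x(s)))/s^{r−1} → 0 as s → ∞, then E[exp(λ E_t^r)] = ∞. -/
/-!
Concavity of `ψ` gives the tangent bound `ψ a ≤ R σ + a ψ'(σ)`; taking `σ = g⁻¹(x s)` and
`a = s^r`, the hypotheses give `s ψ(s^r) = o(s^r)`. Comparing `e^{-s^r D_s}` with the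
indicator of `{D_s ≤ t}` yields `P(D_s ≤ t) ≥ e^{-s ψ(s^r)} - e^{-s^r t}`, while by Chernoff
`P(D_β ≤ t) ≤ e^{t - β ψ(1)}` is negligible for large `β`. On `{D_s ≤ t < D_β}` we have `E_t ≥ s`,
hence `E[exp(λ E_t^r)] ≥ e^{(λ-ε) s^r} - e^{(λ-t) s^r} - 1` for small `ε > 0` and all large `s`.
-/

open MeasureTheory Filter Topology Set Real

lemma abs_one_sub_exp_neg_mul_le {s y : ℝ} (hs : 0 ≤ s) (hy : 0 ≤ y) :
    |1 - exp (-(s * y))| ≤ max s 1 * min y 1 := by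
  have hsy : 0 ≤ s * y := mul_nonneg hs hy
  have hle : exp (-(s * y)) ≤ 1 := exp_le_one_iff.2 (neg_nonpos.2 hsy)
  have hlin : 1 - exp (-(s * y)) ≤ s * y := by linarith [add_one_le_exp (-(s * y))]
  rw [abs_of_nonneg (sub_nonneg.2 hle)]
  rcases le_total y 1 with h1 | h1
  · rw [min_eq_left h1]
    exact hlin.trans (mul_le_mul_of_nonneg_right (le_max_left s 1) hy)
  · rw [min_eq_right h1, mul_one]
    linarith [exp_pos (-(s * y)), le_max_right s 1]

lemma abs_mul_exp_neg_mul_le {c y : ℝ} (hc : 0 < c) (hy : 0 ≤ y) :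
    |y * exp (-(c * y))| ≤ max 1 c⁻¹ * min y 1 := by
  have hle : exp (-(c * y)) ≤ 1 := exp_le_one_iff.2 (neg_nonpos.2 (mul_nonneg hc.le hy))
  rw [abs_of_nonneg (by positivity)]
  rcases le_total y 1 with h1 | h1
  · rw [min_eq_left h1]
    exact (mul_le_of_le_one_right hy hle).trans (le_mul_of_one_le_left hy (le_max_left _ _))
  · have hcy : c * y * exp (-(c * y)) ≤ 1 := by
      calc c * y * exp (-(c * y)) ≤ exp (c * y) * exp (-(c * y)) := by
            gcongr; linarith [add_one_le_exp (c * y)]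
        _ = 1 := by rw [← exp_add, add_neg_cancel, exp_zero]
    rw [min_eq_right h1, mul_one]
    calc y * exp (-(c * y)) = c⁻¹ * (c * y * exp (-(c * y))) := by field_simp
      _ ≤ c⁻¹ := mul_le_of_le_one_right (inv_nonneg.2 hc.le) hcy
      _ ≤ max 1 c⁻¹ := le_max_right _ _

section LaplaceExponent

variable {ν : Measure ℝ}

lemma integrableOn_Ioi_of_abs_le_mul_min_one
    (hν : ∫⁻ y in Ioi (0 : ℝ), ENNReal.ofReal (min y 1) ∂ν < ⊤) {f : ℝ → ℝ}
    (hf : AEStronglyMeasurable f (ν.restrict (Ioi 0))) {K : ℝ}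
    (h : ∀ y, 0 < y → |f y| ≤ K * min y 1) : IntegrableOn f (Ioi 0) ν := by
  have hmin : IntegrableOn (fun y => min y 1) (Ioi 0) ν := by
    refine ⟨by fun_prop, (hasFiniteIntegral_iff_ofReal ?_).2 hν⟩
    filter_upwards [ae_restrict_mem measurableSet_Ioi] with y hy using le_min hy.le zero_le_one
  refine (hmin.const_mul K).mono' hf ?_
  filter_upwards [ae_restrict_mem measurableSet_Ioi] with y hy using h y hy

noncomputable def laplaceExponent (ν : Measure ℝ) (s : ℝ) : ℝ :=
  ∫ y in Ioi 0, (1 - exp (-(s * y))) ∂ν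

lemma integrableOn_one_sub_exp_neg_mul
    (hν : ∫⁻ y in Ioi (0 : ℝ), ENNReal.ofReal (min y 1) ∂ν < ⊤) {s : ℝ} (hs : 0 ≤ s) :
    IntegrableOn (fun y => 1 - exp (-(s * y))) (Ioi 0) ν :=
  integrableOn_Ioi_of_abs_le_mul_min_one hν (by fun_prop)
    fun _ hy => abs_one_sub_exp_neg_mul_le hs hy.le

lemma integrableOn_mul_exp_neg_mul
    (hν : ∫⁻ y in Ioi (0 : ℝ), ENNReal.ofReal (min y 1) ∂ν < ⊤) {c : ℝ} (hc : 0 < c) :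
    IntegrableOn (fun y => y * exp (-(c * y))) (Ioi 0) ν :=
  integrableOn_Ioi_of_abs_le_mul_min_one hν (by fun_prop)
    fun _ hy => abs_mul_exp_neg_mul_le hc hy.le

lemma hasDerivAt_laplaceExponent
    (hν : ∫⁻ y in Ioi (0 : ℝ), ENNReal.ofReal (min y 1) ∂ν < ⊤) {σ : ℝ} (hσ : 0 < σ) :
    HasDerivAt (laplaceExponent ν) (∫ y in Ioi 0, y * exp (-(σ * y)) ∂ν) σ := by
  have hderiv : ∀ y s : ℝ,
      HasDerivAt (fun u => 1 - exp (-(u * y))) (y * exp (-(s * y))) s := fun y s =>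
    ((hasDerivAt_mul_const (x := s) y).neg.exp.const_sub 1).congr_deriv (by simp [mul_comm])
  refine (hasDerivAt_integral_of_dominated_loc_of_deriv_le (F := fun s y => 1 - exp (-(s * y)))
    (Metric.ball_mem_nhds σ (half_pos hσ))
    (.of_forall fun s => by fun_prop) (integrableOn_one_sub_exp_neg_mul hν hσ.le) (by fun_prop)
    ?_ (integrableOn_mul_exp_neg_mul hν (half_pos hσ)) (.of_forall fun y s _ => hderiv y s)).2
  filter_upwards [ae_restrict_mem measurableSet_Ioi] with y (hy : 0 < y) s hs
  have hs' : σ / 2 < s := by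
    have := (abs_lt.1 (mem_ball_iff_norm.1 hs)).1
    linarith
  rw [Real.norm_of_nonneg (by positivity)]
  gcongr

lemma laplaceExponent_le_add_mul_deriv
    (hν : ∫⁻ y in Ioi (0 : ℝ), ENNReal.ofReal (min y 1) ∂ν < ⊤) {a σ : ℝ} (ha : 0 ≤ a)
    (hσ : 0 < σ) :
    laplaceExponent ν a ≤ laplaceExponent ν σ + (a - σ) * deriv (laplaceExponent ν) σ := by
  rw [(hasDerivAt_laplaceExponent hν hσ).deriv, laplaceExponent, laplaceExponent,
    ← integral_const_mul, ← integral_add (integrableOn_one_sub_exp_neg_mul hν hσ.le)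
      ((integrableOn_mul_exp_neg_mul hν hσ).const_mul _)]
  refine integral_mono (integrableOn_one_sub_exp_neg_mul hν ha)
    ((integrableOn_one_sub_exp_neg_mul hν hσ.le).add
      ((integrableOn_mul_exp_neg_mul hν hσ).const_mul _)) fun y => ?_
  have htan : exp (-(σ * y)) * (1 - (a - σ) * y) ≤ exp (-(a * y)) := by
    calc exp (-(σ * y)) * (1 - (a - σ) * y) ≤ exp (-(σ * y)) * exp (-((a - σ) * y)) := by
          gcongr; linarith [add_one_le_exp (-((a - σ) * y))]
      _ = exp (-(a * y)) := by rw [← exp_add]; ring_nf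
  simp only
  nlinarith

lemma laplaceExponent_pos
    (hν : ∫⁻ y in Ioi (0 : ℝ), ENNReal.ofReal (min y 1) ∂ν < ⊤) (hν0 : ν (Ioi 0) ≠ 0)
    {s : ℝ} (hs : 0 < s) : 0 < laplaceExponent ν s := by
  have hpos : ∀ y ∈ Ioi (0 : ℝ), 0 < 1 - exp (-(s * y)) := fun y (hy : 0 < y) =>
    sub_pos.2 (exp_lt_one_iff.2 (neg_lt_zero.2 (mul_pos hs hy)))
  rw [laplaceExponent, setIntegral_pos_iff_support_of_nonneg_ae
    ((ae_restrict_mem measurableSet_Ioi).mono fun y hy => (hpos y hy).le)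
    (integrableOn_one_sub_exp_neg_mul hν hs.le),
    inter_eq_right.2 fun y hy => Function.mem_support.2 (hpos y hy).ne']
  exact pos_iff_ne_zero.2 hν0

end LaplaceExponent

lemma eventually_mul_le_mul_rpow_of_tangent {ψ σ : ℝ → ℝ} {r : ℝ}
    (htan : ∀ a, 0 < a → ∀ b, 0 < b → ψ a ≤ ψ b + (a - b) * deriv ψ b)
    (hσ : ∀ᶠ s in atTop, 0 < σ s)
    (hderiv : Tendsto (fun s => s * deriv ψ (σ s)) atTop (𝓝 0))
    (hR : Tendsto (fun s => (ψ (σ s) - σ s * deriv ψ (σ s)) / s ^ (r - 1)) atTop (𝓝 0))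
    {ε : ℝ} (hε : 0 < ε) :
    ∀ᶠ s in atTop, s * ψ (s ^ r) ≤ ε * s ^ r := by
  have hlim := hR.add hderiv
  rw [add_zero] at hlim
  filter_upwards [hlim.eventually (gt_mem_nhds hε), hσ, eventually_gt_atTop 0]
    with s hsε hσs hs
  have hsr : 0 < s ^ r := rpow_pos_of_pos hs r
  have hpow : s ^ (r - 1) = s ^ r / s := rpow_sub_one hs.ne' r
  calc s * ψ (s ^ r) ≤ s * (ψ (σ s) + (s ^ r - σ s) * deriv ψ (σ s)) :=
        mul_le_mul_of_nonneg_left (htan _ hsr _ hσs) hs.le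
    _ = s ^ r * ((ψ (σ s) - σ s * deriv ψ (σ s)) / s ^ (r - 1) + s * deriv ψ (σ s)) := by
        rw [hpow]; field_simp; ring
    _ ≤ ε * s ^ r := by rw [mul_comm ε]; exact mul_le_mul_of_nonneg_left hsε.le hsr.le

lemma tendsto_exp_mul_sub_exp_mul_atTop {c d : ℝ} (hc : 0 < c) (hdc : d < c) :
    Tendsto (fun a => exp (c * a) - exp (d * a)) atTop atTop := by
  have hexp : Tendsto (fun a => exp (c * a)) atTop atTop :=
    tendsto_exp_atTop.comp (tendsto_id.const_mul_atTop hc)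
  have hone : Tendsto (fun a => 1 - exp ((d - c) * a)) atTop (𝓝 1) := by
    simpa using (tendsto_exp_atBot.comp
      (tendsto_id.const_mul_atTop_of_neg (sub_neg.2 hdc))).const_sub (1 : ℝ)
  refine (hexp.atTop_mul_pos one_pos hone).congr fun a => ?_
  rw [mul_sub, mul_one, ← exp_add]
  ring_nf

section Chernoff

variable {Ω : Type*} [MeasurableSpace Ω] {P : Measure Ω} {X : Ω → ℝ}

lemma integrable_exp_neg_mul_of_nonneg [IsFiniteMeasure P] (hX : Measurable X)
    (hX0 : ∀ ω, 0 ≤ X ω) {a : ℝ} (ha : 0 ≤ a) :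
    Integrable (fun ω => exp (-(a * X ω))) P :=
  (integrable_const 1).mono' (by fun_prop) (.of_forall fun ω => by
    rw [norm_of_nonneg (exp_pos _).le]
    exact exp_le_one_iff.2 (neg_nonpos.2 (mul_nonneg ha (hX0 ω))))

lemma integral_exp_neg_mul_le_measureReal_add [IsProbabilityMeasure P] (hX : Measurable X)
    (hX0 : ∀ ω, 0 ≤ X ω) {a : ℝ} (ha : 0 ≤ a) (t : ℝ) :
    ∫ ω, exp (-(a * X ω)) ∂P ≤ P.real {ω | X ω ≤ t} + exp (-(a * t)) := by
  have hmeas : MeasurableSet {ω | X ω ≤ t} := measurableSet_le hX measurable_const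
  have hind : Integrable ({ω | X ω ≤ t}.indicator fun _ => (1 : ℝ)) P :=
    (integrable_indicator_iff hmeas).2 (integrable_const _).integrableOn
  calc ∫ ω, exp (-(a * X ω)) ∂P
      ≤ ∫ ω, ({ω | X ω ≤ t}.indicator (fun _ => (1 : ℝ)) ω + exp (-(a * t))) ∂P := by
        refine integral_mono (integrable_exp_neg_mul_of_nonneg hX hX0 ha)
          (hind.add (integrable_const _)) fun ω => ?_
        by_cases hω : ω ∈ {ω | X ω ≤ t}
        · rw [indicator_of_mem hω]
          have := exp_le_one_iff.2 (neg_nonpos.2 (mul_nonneg ha (hX0 ω)))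
          linarith [exp_pos (-(a * t))]
        · rw [indicator_of_notMem hω, zero_add]
          exact exp_le_exp.2 (by nlinarith [not_le.1 (notMem_ofPred_iff.1 hω)])
    _ = P.real {ω | X ω ≤ t} + exp (-(a * t)) := by
        rw [integral_add hind (integrable_const _), integral_indicator_const _ hmeas]
        simp

lemma measureReal_le_le_exp_mul_integral_exp_neg_mul [IsFiniteMeasure P] (hX : Measurable X)
    (hX0 : ∀ ω, 0 ≤ X ω) {a : ℝ} (ha : 0 ≤ a) (t : ℝ) :
    P.real {ω | X ω ≤ t} ≤ exp (a * t) * ∫ ω, exp (-(a * X ω)) ∂P := by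
  have h := ProbabilityTheory.measure_le_le_exp_mul_mgf (X := X) (μ := P) t (neg_nonpos.2 ha)
    (by simpa only [neg_mul] using integrable_exp_neg_mul_of_nonneg hX hX0 ha)
  simpa only [ProbabilityTheory.mgf, neg_neg, neg_mul] using h

end Chernoff

lemma MonotoneOn.le_csInf_setOf_lt {f : ℝ → ℝ} (hf : MonotoneOn f (Ici 0)) {s β t : ℝ}
    (hs : 0 ≤ s) (hfs : f s ≤ t) (hβ : 0 < β) (hfβ : t < f β) :
    s ≤ sInf {u | 0 < u ∧ t < f u} := by
  refine le_csInf ⟨β, hβ, hfβ⟩ fun u ⟨hu, htu⟩ => le_of_not_gt fun hus => ?_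
  exact (htu.trans_le (hf (le_of_lt hu) hs hus.le)).not_ge hfs

section InverseSubordinator

variable {Ω : Type*} [MeasurableSpace Ω] {P : Measure Ω} {D : ℝ → Ω → ℝ}

lemma ofReal_exp_mul_sub_le_lintegral_exp_inverse [IsFiniteMeasure P]
    (hDmeas : ∀ u, Measurable (D u)) (hDmono : ∀ ω, MonotoneOn (fun u => D u ω) (Ici 0))
    {lam r s β t : ℝ} (hlam : 0 ≤ lam) (hr : 0 ≤ r) (hs : 0 ≤ s) (hβ : 0 < β) :
    ENNReal.ofReal (exp (lam * s ^ r) * (P.real {ω | D s ω ≤ t} - P.real {ω | D β ω ≤ t})) ≤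
      ∫⁻ ω, ENNReal.ofReal (exp (lam * (sInf {u : ℝ | 0 < u ∧ t < D u ω}) ^ r)) ∂P := by
  -- removing `{D β ≤ t}` keeps the set under `sInf` nonempty (`sInf ∅ = 0` in `ℝ`)
  set B := {ω | D s ω ≤ t} \ {ω | D β ω ≤ t}
  have hB : MeasurableSet B :=
    (measurableSet_le (hDmeas s) measurable_const).diff
      (measurableSet_le (hDmeas β) measurable_const)
  calc ENNReal.ofReal (exp (lam * s ^ r) * (P.real {ω | D s ω ≤ t} - P.real {ω | D β ω ≤ t}))
      ≤ ENNReal.ofReal (exp (lam * s ^ r) * P.real B) :=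
        ENNReal.ofReal_le_ofReal (mul_le_mul_of_nonneg_left le_measureReal_sdiff (exp_pos _).le)
    _ = ∫⁻ ω, B.indicator (fun _ => ENNReal.ofReal (exp (lam * s ^ r))) ω ∂P := by
        rw [lintegral_indicator_const hB, ENNReal.ofReal_mul (exp_pos _).le, ofReal_measureReal]
    _ ≤ _ := by
        refine lintegral_mono fun ω => ?_
        by_cases hω : ω ∈ B
        · rw [indicator_of_mem hω]
          have hsE := (hDmono ω).le_csInf_setOf_lt hs hω.1 hβ (not_le.1 hω.2)
          gcongr
        · simp [indicator_of_notMem hω]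

lemma ofReal_exp_sub_exp_sub_one_le_lintegral_exp_inverse [IsProbabilityMeasure P]
    {ψ : ℝ → ℝ} (hDmeas : ∀ u, Measurable (D u)) (hD0 : ∀ ω, D 0 ω = 0)
    (hDmono : ∀ ω, MonotoneOn (fun u => D u ω) (Ici 0))
    (hlaplace : ∀ s, 0 < s → ∀ u, 0 ≤ u →
      ∫ ω, exp (-(s * D u ω)) ∂P = exp (-(u * ψ s)))
    (hψ1 : 0 < ψ 1) {lam r s t ε : ℝ} (hlam : 0 ≤ lam) (hr : 0 ≤ r) (hs : 0 < s)
    (hsε : s * ψ (s ^ r) ≤ ε * s ^ r) :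
    ENNReal.ofReal (exp ((lam - ε) * s ^ r) - exp ((lam - t) * s ^ r) - 1) ≤
      ∫⁻ ω, ENNReal.ofReal (exp (lam * (sInf {u : ℝ | 0 < u ∧ t < D u ω}) ^ r)) ∂P := by
  have hD : ∀ u, 0 ≤ u → ∀ ω, 0 ≤ D u ω := fun u hu ω =>
    hD0 ω ▸ hDmono ω (mem_Ici.2 le_rfl) hu hu
  set a := s ^ r
  have ha : 0 < a := rpow_pos_of_pos hs r
  -- `β` is chosen so large that `exp (lam * a) * P.real {ω | D β ω ≤ t} ≤ 1`
  set β := max 1 ((lam * a + t) / ψ 1)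
  have hβ : lam * a + t ≤ β * ψ 1 := (div_le_iff₀ hψ1).1 (le_max_right _ _)
  have hβ0 : 0 < β := lt_of_lt_of_le one_pos (le_max_left _ _)
  have hlow := integral_exp_neg_mul_le_measureReal_add (P := P) (hDmeas s) (hD s hs.le) ha.le t
  have hup := measureReal_le_le_exp_mul_integral_exp_neg_mul (P := P) (hDmeas β) (hD β hβ0.le)
    zero_le_one t
  rw [hlaplace a ha s hs.le] at hlow
  rw [hlaplace 1 one_pos β hβ0.le] at hup
  refine le_trans (ENNReal.ofReal_le_ofReal ?_) (ofReal_exp_mul_sub_le_lintegral_exp_inverse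
    hDmeas hDmono hlam hr hs.le hβ0)
  calc exp ((lam - ε) * a) - exp ((lam - t) * a) - 1
      ≤ exp (lam * a) * (exp (-(s * ψ a)) - exp (-(a * t)) - exp (1 * t) * exp (-(β * ψ 1))) := by
        simp only [mul_sub, ← exp_add]
        gcongr
        · nlinarith
        · linarith
        · exact exp_le_one_iff.2 (by linarith)
    _ ≤ exp (lam * a) * (P.real {ω | D s ω ≤ t} - P.real {ω | D β ω ≤ t}) := by
        gcongr; linarith

end InverseSubordinator

theorem exp_moment_inverse_subordinator_infinite_of_tail_limit_general
    {Ω : Type*} [MeasurableSpace Ω] (P : Measure Ω) [IsProbabilityMeasure P]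
    (D : ℝ → Ω → ℝ) (ν : Measure ℝ) (ψ : ℝ → ℝ) (lam t r : ℝ)
    (hDmeas : ∀ u, Measurable (D u))
    (hD0 : ∀ ω, D 0 ω = 0)
    (hDmono : ∀ ω, MonotoneOn (fun u => D u ω) (Set.Ici 0))
    (hν : ∫⁻ y in Set.Ioi (0 : ℝ), ENNReal.ofReal (min y 1) ∂ν < ⊤)
    (hνinf : ν (Set.Ioi (0 : ℝ)) = ⊤)
    (hψ : ∀ s, 0 < s → ψ s = ∫ y in Set.Ioi (0 : ℝ), (1 - Real.exp (-(s * y))) ∂ν)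
    (hlaplace : ∀ s, 0 < s → ∀ u, 0 ≤ u →
      ∫ ω, Real.exp (-(s * D u ω)) ∂P = Real.exp (-(u * ψ s)))
    (hlam : 0 < lam) (ht : 0 < t) (hr : 0 < r)
    (M : ℝ) (x xinv : ℝ → ℝ)
    (hxrange : ∀ s, M ≤ s → 0 < xinv s ∧ deriv ψ (xinv s) = x s)
    (hxzero : Tendsto (fun s => s * x s) atTop (𝓝 0))
    (hRzero : Tendsto
      (fun s => (ψ (xinv s) - xinv s * deriv ψ (xinv s)) / s ^ (r - 1)) atTop (𝓝 0)) :
    ∫⁻ ω, ENNReal.ofReal (Real.exp (lam * (sInf {u : ℝ | 0 < u ∧ t < D u ω}) ^ r)) ∂P = ⊤ := by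
  have hψeq : EqOn ψ (laplaceExponent ν) (Ioi 0) := hψ
  have hψ1 : 0 < ψ 1 := by
    rw [hψ 1 one_pos]
    exact laplaceExponent_pos hν (by simp [hνinf]) one_pos
  have htan : ∀ a, 0 < a → ∀ b, 0 < b → ψ a ≤ ψ b + (a - b) * deriv ψ b := fun a ha b hb => by
    rw [hψeq ha, hψeq hb, (hψeq.eventuallyEq_of_mem (Ioi_mem_nhds hb)).deriv_eq]
    exact laplaceExponent_le_add_mul_deriv hν ha.le hb
  have hderiv : Tendsto (fun s => s * deriv ψ (xinv s)) atTop (𝓝 0) :=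
    hxzero.congr' (by filter_upwards [eventually_ge_atTop M] with s hs; rw [(hxrange s hs).2])
  obtain ⟨ε, hε, hεlt⟩ := exists_between (lt_min hlam ht)
  obtain ⟨hεlam, hεt⟩ := lt_min_iff.1 hεlt
  have hlim := (tendsto_exp_mul_sub_exp_mul_atTop (c := lam - ε) (d := lam - t) (by linarith)
    (by linarith)).comp (tendsto_rpow_atTop hr)
  refine ENNReal.eq_top_of_forall_nnreal_le fun C => ?_
  obtain ⟨s, hsC, hsε, hs⟩ := ((hlim.eventually_ge_atTop (C + 1)).and
    ((eventually_mul_le_mul_rpow_of_tangent htan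
      ((eventually_ge_atTop M).mono fun s hs => (hxrange s hs).1) hderiv hRzero hε).and
      (eventually_gt_atTop 0))).exists
  rw [Function.comp_apply] at hsC
  calc (C : ENNReal) ≤ ENNReal.ofReal (exp ((lam - ε) * s ^ r) - exp ((lam - t) * s ^ r) - 1) :=
        ENNReal.ofReal_coe_nnreal ▸ ENNReal.ofReal_le_ofReal (by linarith)
    _ ≤ _ := ofReal_exp_sub_exp_sub_one_le_lintegral_exp_inverse hDmeas hD0 hDmono hlaplace hψ1
        hlam.le hr.le hs hsε

/-- Let `D` be a subordinator with infinite Lévy measure `ν` and Laplace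
exponent `ψ`, let `E_t = inf {u > 0 : D_u > t}` be its inverse, and set `g = ψ'`,
`R s = ψ s - s ψ' s`.  Fix `λ > 0`, `t > 0`, `r > 0`.  If there exist `M > 0` and a
decreasing function `x : [M,∞) → (g(∞), g(0+))` (encoded by a positive preimage function
`xinv` with `g (xinv s) = x s`) such that `s * x s → 0` and
`R (g⁻¹ (x s)) / s ^ (r-1) → 0` as `s → ∞`, then `E[exp (λ E_t ^ r)] = ∞`. -/
theorem exp_moment_inverse_subordinator_infinite_of_tail_limit
    {Ω : Type*} [MeasurableSpace Ω] (P : Measure Ω) [IsProbabilityMeasure P]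
    (D : ℝ → Ω → ℝ) (ν : Measure ℝ) (ψ : ℝ → ℝ) (lam t r : ℝ)
    (hDmeas : ∀ u, Measurable (D u))
    (hD0 : ∀ ω, D 0 ω = 0)
    (hDmono : ∀ ω, MonotoneOn (fun u => D u ω) (Set.Ici 0))
    (hDrc : ∀ ω, ∀ u, 0 ≤ u → ContinuousWithinAt (fun v => D v ω) (Set.Ici u) u)
    (hstat : ∀ s u : ℝ, 0 ≤ s → 0 ≤ u →
      Measure.map (fun ω => D (s + u) ω - D s ω) P = Measure.map (D u) P)
    (hindep : ∀ (n : ℕ) (τ : Fin (n + 1) → ℝ), (∀ i, 0 ≤ τ i) → Monotone τ →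
      ProbabilityTheory.iIndepFun
        (fun i : Fin n => fun ω => D (τ i.succ) ω - D (τ i.castSucc) ω) P)
    (hν : ∫⁻ y in Set.Ioi (0 : ℝ), ENNReal.ofReal (min y 1) ∂ν < ⊤)
    (hνinf : ν (Set.Ioi (0 : ℝ)) = ⊤)
    (hψ : ∀ s, 0 < s → ψ s = ∫ y in Set.Ioi (0 : ℝ), (1 - Real.exp (-(s * y))) ∂ν)
    (hlaplace : ∀ s, 0 < s → ∀ u, 0 ≤ u →
      ∫ ω, Real.exp (-(s * D u ω)) ∂P = Real.exp (-(u * ψ s)))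
    (hlam : 0 < lam) (ht : 0 < t) (hr : 0 < r)
    (M : ℝ) (x xinv : ℝ → ℝ) (hM : 0 < M)
    (hxrange : ∀ s, M ≤ s → 0 < xinv s ∧ deriv ψ (xinv s) = x s)
    (hxanti : ∀ s₁ s₂, M ≤ s₁ → s₁ ≤ s₂ → x s₂ ≤ x s₁)
    (hxzero : Tendsto (fun s => s * x s) atTop (𝓝 0))
    (hRzero : Tendsto
      (fun s => (ψ (xinv s) - xinv s * deriv ψ (xinv s)) / s ^ (r - 1)) atTop (𝓝 0)) :
    ∫⁻ ω, ENNReal.ofReal (Real.exp (lam * (sInf {u : ℝ | 0 < u ∧ t < D u ω}) ^ r)) ∂P = ⊤ :=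
  exp_moment_inverse_subordinator_infinite_of_tail_limit_general P D ν ψ lam t r hDmeas hD0 hDmono
    hν hνinf hψ hlaplace hlam ht hr M x xinv hxrange hxzero hRzero
end
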